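/- Let (m_i)_{i∈ℕ} and (n_i)_{i∈ℕ} be sequences of priorities in a finite set C ⊆ ℕ such that for every i, m_i is 'at least as good' as n_i in the parity order (m_i ⊒ n_i, meaning: if n_i is even then m_i is even and m_i ≥ n_i, and if m_i is odd then n_i is odd and m_i ≤ n_i). If max Inf(n) is even, then max Inf(m) is even, where Inf(x) denotes the set of values occurring infinitely often in the sequence x. -/

import Mathlib

/-- Pigeonhole: a function into a finite set has an infinite fiber on any
infinite set of indices. -/
lemma exists_infinite_fiber_inter (C : Set ℕ) (hC : C.Finite) (f : ℕ → ℕ)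
    (hf : ∀ i, f i ∈ C) (S : Set ℕ) (hS : S.Infinite) :
    ∃ c, ({i : ℕ | f i = c} ∩ S).Infinite := by
  by_contra h
  push_neg at h
  have : S ⊆ ⋃ c ∈ C, ({i : ℕ | f i = c} ∩ S) := by
    intro i hi
    exact Set.mem_biUnion (hf i) ⟨rfl, hi⟩
  exact hS ((hC.biUnion fun c _ => h c).subset this)

/-- Improving each priority of a sequence pointwise in the parity order
(`m ⊒ n`: even is better than odd, larger is better among even, smaller is
better among odd) preserves acceptance of the parity condition: if the maximal
priority occurring infinitely often in `n` is even, then so is the maximal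
priority occurring infinitely often in `m`. -/
theorem parity_improvement_preserves_acceptance
    (C : Set ℕ) (hC : C.Finite) (hCne : C.Nonempty)
    (m n : ℕ → ℕ) (hm : ∀ i, m i ∈ C) (hn : ∀ i, n i ∈ C)
    (hgood : ∀ i, (Even (n i) → Even (m i) ∧ n i ≤ m i) ∧
                  (Odd (m i) → Odd (n i) ∧ m i ≤ n i))
    (hacc : Even (sSup {c : ℕ | {i : ℕ | n i = c}.Infinite})) :
    Even (sSup {c : ℕ | {i : ℕ | m i = c}.Infinite}) := by
  set Im := {c : ℕ | {i : ℕ | m i = c}.Infinite} with hIm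
  set In := {c : ℕ | {i : ℕ | n i = c}.Infinite} with hIn
  have hImC : Im ⊆ C := by
    intro c hc
    obtain ⟨i, hi⟩ := hc.nonempty
    exact hi ▸ hm i
  have hInC : In ⊆ C := by
    intro c hc
    obtain ⟨i, hi⟩ := hc.nonempty
    exact hi ▸ hn i
  have hImne : Im.Nonempty := by
    obtain ⟨c, hc⟩ := exists_infinite_fiber_inter C hC m hm Set.univ
      Set.infinite_univ
    exact ⟨c, hc.mono (Set.inter_subset_left)⟩
  have hImbdd : BddAbove Im := (hC.subset hImC).bddAbove
  have hInbdd : BddAbove In := (hC.subset hInC).bddAbove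
  have hMmem : sSup Im ∈ Im := Nat.sSup_mem hImne hImbdd
  set M := sSup Im with hM
  by_contra hodd
  rw [Nat.not_even_iff_odd] at hodd
  -- infinitely many i with m i = M; pigeonhole n on that set
  obtain ⟨c, hc⟩ := exists_infinite_fiber_inter C hC n hn {i | m i = M} hMmem
  obtain ⟨i0, hi0n, hi0m⟩ := hc.nonempty
  have hcodd : Odd c ∧ M ≤ c := by
    have := (hgood i0).2 (hi0m ▸ hodd)
    rw [hi0n, hi0m] at this
    exact this
  have hcIn : c ∈ In := hc.mono (Set.inter_subset_left)
  have hInne : In.Nonempty := ⟨c, hcIn⟩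
  have hNmem : sSup In ∈ In := Nat.sSup_mem hInne hInbdd
  set N := sSup In with hN
  have hcN : c ≤ N := le_csSup hInbdd hcIn
  -- infinitely many i with n i = N; pigeonhole m on that set
  obtain ⟨d, hd⟩ := exists_infinite_fiber_inter C hC m hm {i | n i = N} hNmem
  obtain ⟨i1, hi1m, hi1n⟩ := hd.nonempty
  have hdprop : Even d ∧ N ≤ d := by
    have := (hgood i1).1 (hi1n ▸ hacc)
    rw [hi1n, hi1m] at this
    exact this
  have hdIm : d ∈ Im := hd.mono (Set.inter_subset_left)
  have hdM : d ≤ M := le_csSup hImbdd hdIm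
  have : d = M := le_antisymm hdM (le_trans hcodd.2 (le_trans hcN hdprop.2))
  rw [this] at hdprop
  exact (Nat.not_odd_iff_even.mpr hdprop.1) hodd
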